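/- Let f(X) = a_0 + a_1 X + ... + a_n X^n ∈ Z[X]. Suppose there exist three distinct indices j_1, j_2, j_3 ∈ {1, ..., n-1} and three distinct primes p, q, r such that for each pair (s, j) ∈ {(p, j_1), (q, j_2), (r, j_3)}: s divides a_i for all i ≠ j, s does not divide a_j, s^2 does not divide a_0, and s^2 does not divide a_n. Then f is irreducible over Q. -/

import Mathlib

/-!
Modulo a prime `p` with `f.IsBiEisensteinAt p j`, `f` becomes a monomial `c Xʲ`, so for `f = g * h`
the reductions of `g` and `h` are monomials whose degrees add up to `j`. As `p² ∤ a₀`, one of the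
reductions is constant, and as `p² ∤ aₙ`, one of `g`, `h` keeps its degree modulo `p`; hence `g` or
`h` is constant or has degree `j`. Three distinct such `j` cannot all be the degree of `g` or of
`h`, so one factor is constant, and Gauss's lemma passes from `ℤ` to `ℚ`.
-/

open Polynomial Finset

namespace Polynomial

section Monomial

variable {S : Type*} [CommRing S] [IsDomain S] {φ ψ : S[X]} {j : ℕ} {c : S}

theorem natDegree_add_natDegree_of_mul_eq_monomial (hc : c ≠ 0) (hφψ : φ * ψ = monomial j c) :
    φ.natDegree + ψ.natDegree = j := by
  have hφψ0 : φ * ψ ≠ 0 := by simpa [hφψ] using hc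
  rw [← natDegree_mul (left_ne_zero_of_mul hφψ0) (right_ne_zero_of_mul hφψ0), hφψ,
    natDegree_monomial_eq j hc]

theorem natTrailingDegree_eq_natDegree_of_mul_eq_monomial (hc : c ≠ 0)
    (hφψ : φ * ψ = monomial j c) : φ.natTrailingDegree = φ.natDegree := by
  have hφψ0 : φ * ψ ≠ 0 := by simpa [hφψ] using hc
  have htrail := natTrailingDegree_mul (left_ne_zero_of_mul hφψ0) (right_ne_zero_of_mul hφψ0)
  rw [hφψ, natTrailingDegree_monomial hc] at htrail
  have := natDegree_add_natDegree_of_mul_eq_monomial hc hφψ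
  have := natTrailingDegree_le_natDegree φ
  have := natTrailingDegree_le_natDegree ψ
  omega

end Monomial

theorem IsPrimitive.isUnit_of_dvd_of_natDegree_eq_zero {R : Type*} [CommRing R] {f g : R[X]}
    (hf : f.IsPrimitive) (hg : g ∣ f) (hg0 : g.natDegree = 0) : IsUnit g := by
  obtain ⟨b, rfl⟩ := natDegree_eq_zero.mp hg0
  exact isUnit_C.mpr (isPrimitive_iff_isUnit_of_C_dvd.mp hf b hg)

section GaussLemma

variable {R K : Type*} [CommRing R] [IsDomain R] [NormalizedGCDMonoid R] [Field K] [Algebra R K]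
  [IsFractionRing R K]

theorem irreducible_map_fraction_map_of_forall_natDegree_eq_zero {f : R[X]}
    (hf : 0 < f.natDegree) (hfac : ∀ g h, f = g * h → g.natDegree = 0 ∨ h.natDegree = 0) :
    Irreducible (f.map (algebraMap R K)) := by
  have hc : f.content ≠ 0 := content_eq_zero_iff.not.mpr (ne_zero_of_natDegree_gt hf)
  have hG := f.isPrimitive_primPart
  have hGirr : Irreducible f.primPart := by
    refine ⟨not_isUnit_of_natDegree_pos _ (by rwa [natDegree_primPart]), fun g h hgh => ?_⟩
    have := hfac (C f.content * g) h (by rw [mul_assoc, ← hgh, ← eq_C_content_mul_primPart])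
    rw [natDegree_C_mul hc] at this
    exact this.imp (hG.isUnit_of_dvd_of_natDegree_eq_zero (Dvd.intro h hgh.symm))
      (hG.isUnit_of_dvd_of_natDegree_eq_zero (Dvd.intro_left g hgh.symm))
  rw [f.eq_C_content_mul_primPart, Polynomial.map_mul, map_C, irreducible_isUnit_mul
    (isUnit_C.mpr ((IsFractionRing.injective R K).ne hc |>.trans_eq (map_zero _)).isUnit)]
  exact hG.irreducible_iff_irreducible_map_fraction_map.mp hGirr

end GaussLemma

/-- The `p`-adic Newton polygon of `f` consists of the two edges `(0,1)–(j,0)–(n,1)`: `f` is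
`p`-Eisenstein below `j` and reversed `p`-Eisenstein above `j`. -/
structure IsBiEisensteinAt {R : Type*} [CommSemiring R] (f : R[X]) (p : R) (j : ℕ) : Prop where
  dvd_coeff : ∀ i ≠ j, p ∣ f.coeff i
  not_dvd_coeff : ¬ p ∣ f.coeff j
  not_sq_dvd_coeff_zero : ¬ p ^ 2 ∣ f.coeff 0
  not_sq_dvd_leadingCoeff : ¬ p ^ 2 ∣ f.leadingCoeff

namespace IsBiEisensteinAt

variable {R : Type*} [CommRing R] {f g h : R[X]} {p : R} {j : ℕ}

theorem map_mk_eq_monomial (hf : f.IsBiEisensteinAt p j) :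
    f.map (Ideal.Quotient.mk (Ideal.span {p})) =
      monomial j (Ideal.Quotient.mk (Ideal.span {p}) (f.coeff j)) := by
  ext i
  rw [coeff_map, coeff_monomial]
  split_ifs with hij
  · rw [hij]
  · exact (Ideal.Quotient.eq_zero_iff_dvd _ _).mpr (hf.dvd_coeff i (Ne.symm hij))

theorem natDegree_eq_of_mul_eq [IsDomain R] (hf : f.IsBiEisensteinAt p j) (hp : Prime p)
    (hfgh : f = g * h) :
    g.natDegree = 0 ∨ h.natDegree = 0 ∨ g.natDegree = j ∨ h.natDegree = j := by
  have := (Ideal.span_singleton_prime hp.ne_zero).mpr hp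
  set π := Ideal.Quotient.mk (Ideal.span {p})
  have hπ (u : R[X]) (i : ℕ) : (u.map π).coeff i = 0 → p ∣ u.coeff i := by
    rw [coeff_map]
    exact (Ideal.Quotient.eq_zero_iff_dvd _ _).mp
  have hc : π (f.coeff j) ≠ 0 := fun h0 =>
    hf.not_dvd_coeff ((Ideal.Quotient.eq_zero_iff_dvd _ _).mp h0)
  have hgh : g.map π * h.map π = monomial j (π (f.coeff j)) := by
    rw [← Polynomial.map_mul, ← hfgh, hf.map_mk_eq_monomial]
  have hhg : h.map π * g.map π = monomial j (π (f.coeff j)) := by rw [mul_comm, hgh]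
  have hdeg := natDegree_add_natDegree_of_mul_eq_monomial hc hgh
  have htg := natTrailingDegree_eq_natDegree_of_mul_eq_monomial hc hgh
  have hth := natTrailingDegree_eq_natDegree_of_mul_eq_monomial hc hhg
  have hbottom : (g.map π).natDegree = 0 ∨ (h.map π).natDegree = 0 := by
    by_contra! hpos
    apply hf.not_sq_dvd_coeff_zero
    rw [hfgh, mul_coeff_zero, sq]
    exact mul_dvd_mul (hπ g 0 (coeff_eq_zero_of_lt_natTrailingDegree (by omega)))
      (hπ h 0 (coeff_eq_zero_of_lt_natTrailingDegree (by omega)))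
  have htop : (g.map π).natDegree = g.natDegree ∨ (h.map π).natDegree = h.natDegree := by
    by_contra! hdrop
    apply hf.not_sq_dvd_leadingCoeff
    rw [hfgh, leadingCoeff_mul, sq]
    exact mul_dvd_mul (hπ g _ (coeff_eq_zero_of_natDegree_lt (natDegree_map_le.lt_of_ne hdrop.1)))
      (hπ h _ (coeff_eq_zero_of_natDegree_lt (natDegree_map_le.lt_of_ne hdrop.2)))
  omega

end IsBiEisensteinAt

section SumRange

variable {R : Type*} [CommSemiring R] {a : ℕ → R} {n j : ℕ} {p : R}

theorem coeff_sum_range_C_mul_X_pow (k : ℕ) :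
    (∑ i ∈ range n, C (a i) * X ^ i).coeff k = if k < n then a k else 0 := by
  simp

theorem natDegree_sum_range_C_mul_X_pow (ha : a n ≠ 0) :
    (∑ i ∈ range (n + 1), C (a i) * X ^ i).natDegree = n := by
  refine natDegree_eq_of_le_of_coeff_ne_zero ?_ (by simpa [coeff_sum_range_C_mul_X_pow] using ha)
  exact natDegree_sum_le_of_forall_le _ _ fun i hi => natDegree_C_mul_X_pow_le _ _ |>.trans
    (Nat.lt_succ_iff.mp (mem_range.mp hi))

theorem isBiEisensteinAt_sum_range (hj : j ≤ n) (hdvd : ∀ i ≤ n, i ≠ j → p ∣ a i)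
    (hndvd : ¬ p ∣ a j) (h0 : ¬ p ^ 2 ∣ a 0) (hn : ¬ p ^ 2 ∣ a n) :
    (∑ i ∈ range (n + 1), C (a i) * X ^ i).IsBiEisensteinAt p j where
  dvd_coeff i hij := by
    rw [coeff_sum_range_C_mul_X_pow]
    split_ifs with hi
    · exact hdvd i (Nat.lt_succ_iff.mp hi) hij
    · exact dvd_zero p
  not_dvd_coeff := by rwa [coeff_sum_range_C_mul_X_pow, if_pos (Nat.lt_succ_of_le hj)]
  not_sq_dvd_coeff_zero := by rwa [coeff_sum_range_C_mul_X_pow, if_pos n.succ_pos]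
  not_sq_dvd_leadingCoeff := by
    rwa [leadingCoeff, natDegree_sum_range_C_mul_X_pow fun ha => hn (by rw [ha]; exact dvd_zero _),
      coeff_sum_range_C_mul_X_pow, if_pos n.lt_succ_self]

end SumRange

end Polynomial

theorem corollary_1_27_general (n : ℕ) (a : ℕ → ℤ)
    (j₁ j₂ j₃ : ℕ)
    (hj1n : j₁ ≤ n - 1) (hj2n : j₂ ≤ n - 1) (hj3n : j₃ ≤ n - 1)
    (h12 : j₁ ≠ j₂) (h13 : j₁ ≠ j₃) (h23 : j₂ ≠ j₃)
    (p q r : ℕ) (hp : p.Prime) (hq : q.Prime) (hr : r.Prime)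
    (hp1 : ∀ i ≤ n, i ≠ j₁ → (p : ℤ) ∣ a i) (hp2 : ¬ (p : ℤ) ∣ a j₁)
    (hp3 : ¬ (p : ℤ)^2 ∣ a 0) (hp4 : ¬ (p : ℤ)^2 ∣ a n)
    (hq1 : ∀ i ≤ n, i ≠ j₂ → (q : ℤ) ∣ a i) (hq2 : ¬ (q : ℤ) ∣ a j₂)
    (hq3 : ¬ (q : ℤ)^2 ∣ a 0) (hq4 : ¬ (q : ℤ)^2 ∣ a n)
    (hr1 : ∀ i ≤ n, i ≠ j₃ → (r : ℤ) ∣ a i) (hr2 : ¬ (r : ℤ) ∣ a j₃)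
    (hr3 : ¬ (r : ℤ)^2 ∣ a 0) (hr4 : ¬ (r : ℤ)^2 ∣ a n) :
    Irreducible ((∑ i ∈ range (n+1), C (a i) * X ^ i).map (Int.castRingHom ℚ)) := by
  have hj₁ : j₁ ≤ n := hj1n.trans (n.sub_le 1)
  have hj₂ : j₂ ≤ n := hj2n.trans (n.sub_le 1)
  have hj₃ : j₃ ≤ n := hj3n.trans (n.sub_le 1)
  rw [← algebraMap_int_eq]
  refine irreducible_map_fraction_map_of_forall_natDegree_eq_zero ?_ fun g h hgh => ?_
  · rw [natDegree_sum_range_C_mul_X_pow fun ha => hp4 (by rw [ha]; exact dvd_zero _)]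
    clear * - hj1n hj2n h12
    omega
  have hgp := (isBiEisensteinAt_sum_range hj₁ hp1 hp2 hp3 hp4).natDegree_eq_of_mul_eq
    (Nat.prime_iff_prime_int.mp hp) hgh
  have hgq := (isBiEisensteinAt_sum_range hj₂ hq1 hq2 hq3 hq4).natDegree_eq_of_mul_eq
    (Nat.prime_iff_prime_int.mp hq) hgh
  have hgr := (isBiEisensteinAt_sum_range hj₃ hr1 hr2 hr3 hr4).natDegree_eq_of_mul_eq
    (Nat.prime_iff_prime_int.mp hr) hgh
  clear * - hgp hgq hgr h12 h13 h23
  omega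

theorem corollary_1_27 (n : ℕ) (hn : 1 ≤ n) (a : ℕ → ℤ)
    (j₁ j₂ j₃ : ℕ)
    (hj1 : 1 ≤ j₁) (hj1n : j₁ ≤ n - 1) (hj2 : 1 ≤ j₂) (hj2n : j₂ ≤ n - 1)
    (hj3 : 1 ≤ j₃) (hj3n : j₃ ≤ n - 1)
    (h12 : j₁ ≠ j₂) (h13 : j₁ ≠ j₃) (h23 : j₂ ≠ j₃)
    (p q r : ℕ) (hp : p.Prime) (hq : q.Prime) (hr : r.Prime)
    (hpq : p ≠ q) (hpr : p ≠ r) (hqr : q ≠ r)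
    (hp1 : ∀ i ≤ n, i ≠ j₁ → (p : ℤ) ∣ a i) (hp2 : ¬ (p : ℤ) ∣ a j₁)
    (hp3 : ¬ (p : ℤ)^2 ∣ a 0) (hp4 : ¬ (p : ℤ)^2 ∣ a n)
    (hq1 : ∀ i ≤ n, i ≠ j₂ → (q : ℤ) ∣ a i) (hq2 : ¬ (q : ℤ) ∣ a j₂)
    (hq3 : ¬ (q : ℤ)^2 ∣ a 0) (hq4 : ¬ (q : ℤ)^2 ∣ a n)
    (hr1 : ∀ i ≤ n, i ≠ j₃ → (r : ℤ) ∣ a i) (hr2 : ¬ (r : ℤ) ∣ a j₃)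
    (hr3 : ¬ (r : ℤ)^2 ∣ a 0) (hr4 : ¬ (r : ℤ)^2 ∣ a n) :
    Irreducible ((∑ i ∈ range (n+1), C (a i) * X ^ i).map (Int.castRingHom ℚ)) :=
  corollary_1_27_general n a j₁ j₂ j₃ hj1n hj2n hj3n h12 h13 h23 p q r hp hq hr hp1 hp2 hp3 hp4 hq1
    hq2 hq3 hq4 hr1 hr2 hr3 hr4
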